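/- arXiv:1005.2694 — 5 statements merged into one kernel-verified Lean document; each statement's English description precedes it below -/
import Mathlib

section
/- For the same system, L_g L_f h(x) = 0, i.e. the second derivative of the output still does not depend on the input. -/
/-- No differentiability is needed: where `f` is not differentiable, `fderiv` is `0` by
convention. -/
theorem fderiv_apply_eq_zero_of_forall_add_smul {E F : Type*} [NormedAddCommGroup E]
    [NormedSpace ℝ E] [NormedAddCommGroup F] [NormedSpace ℝ F] {f : E → F} {x v : E}
    (hf : ∀ t : ℝ, f (x + t • v) = f x) : fderiv ℝ f x v = 0 := by
  by_cases hdiff : DifferentiableAt ℝ f x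
  · rw [← hdiff.lineDeriv_eq_fderiv, lineDeriv, funext hf, deriv_const]
  · rw [fderiv_zero_of_not_differentiableAt hdiff, zero_apply]

theorem stmt2_general (T_sup ω K α p_lp : ℝ)
    (Lfh : (Fin 4 → ℝ) → ℝ)
    (hLfh : Lfh = fun x => T_sup * x 3 * Real.sqrt (x 1 - x 0 - α * p_lp))
    (g : Fin 4 → ℝ) (hg : g = ![0, 0, ω^2 * K, 0]) :
    ∀ x : Fin 4 → ℝ, x 1 - x 0 - α * p_lp > 0 →
      fderiv ℝ Lfh x g = 0 := by
  intro x _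
  apply fderiv_apply_eq_zero_of_forall_add_smul
  -- `g` moves only the coordinate `x 2`, on which `Lfh` does not depend.
  intro t
  subst hLfh hg
  simp only [Pi.add_apply, Pi.smul_apply, smul_eq_mul]
  simp [Matrix.cons_val]

/-- With L_f h(x) = T_sup·x_v·√(p_sup − p_L − α·p_lp), the Lie
derivative L_g L_f h(x) = ∇(L_f h)(x)·g vanishes, so the second derivative
of the output does not depend on the input. -/
theorem stmt2 (T_L T_sup D ω K α p_lp : ℝ)
    (Lfh : (Fin 4 → ℝ) → ℝ)
    (hLfh : Lfh = fun x => T_sup * x 3 * Real.sqrt (x 1 - x 0 - α * p_lp))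
    (g : Fin 4 → ℝ) (hg : g = ![0, 0, ω^2 * K, 0]) :
    ∀ x : Fin 4 → ℝ, x 1 - x 0 - α * p_lp > 0 →
      fderiv ℝ Lfh x g = 0 :=
  stmt2_general T_sup ω K α p_lp Lfh hLfh g hg
end

section
/- For the same system, the second Lie derivative of the output along f is L_f² h(x) = (1/2)·T_sup·(T_sup − T_L)·x_v² + T_sup·v·√(p_sup − p_L − α·p_lp). -/
open ContinuousLinearMap

theorem HasFDerivAt.mul_sqrt {E : Type*} [NormedAddCommGroup E] [NormedSpace ℝ E]
    {u w : E → ℝ} {u' w' : E →L[ℝ] ℝ} {x : E} (hu : HasFDerivAt u u' x)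
    (hw : HasFDerivAt w w' x) (hwx : 0 < w x) :
    HasFDerivAt (fun y => u y * √(w y)) (√(w x) • u' + (u x / (2 * √(w x))) • w') x := by
  refine (hu.mul (hw.sqrt hwx.ne')).congr_fderiv ?_
  ext v
  simp only [one_div, mul_inv_rev, add_apply, smul_apply, smul_eq_mul]
  ring

theorem stmt3_general (T_L T_sup D ω α p_lp : ℝ)
    (Lfh : (Fin 4 → ℝ) → ℝ)
    (hLfh : Lfh = fun x => T_sup * x 3 * Real.sqrt (x 1 - x 0 - α * p_lp))
    (f : (Fin 4 → ℝ) → (Fin 4 → ℝ))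
    (hf : f = fun x => ![T_L * x 3 * Real.sqrt (x 1 - x 0 - α * p_lp),
                         T_sup * x 3 * Real.sqrt (x 1 - x 0 - α * p_lp),
                         -2 * D * ω * x 2 - ω^2 * x 3,
                         x 2]) :
    ∀ x : Fin 4 → ℝ, x 1 - x 0 - α * p_lp > 0 →
      fderiv ℝ Lfh x (f x) =
        (1/2) * T_sup * (T_sup - T_L) * (x 3)^2
          + T_sup * x 2 * Real.sqrt (x 1 - x 0 - α * p_lp) := by
  intro x hx
  subst hLfh hf
  have hu := (hasFDerivAt_apply (𝕜 := ℝ) (3 : Fin 4) x).const_mul T_sup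
  have hw := ((hasFDerivAt_apply (𝕜 := ℝ) (1 : Fin 4) x).fun_sub
    (hasFDerivAt_apply (𝕜 := ℝ) 0 x)).sub_const (α * p_lp)
  have hs : 0 < √(x 1 - x 0 - α * p_lp) := Real.sqrt_pos.mpr hx
  rw [(hu.mul_sqrt hw hx).fderiv]
  simp only [Fin.isValue, add_apply, smul_apply, proj_apply, sub_apply, smul_eq_mul,
    Matrix.cons_val, Matrix.cons_val_one, Matrix.cons_val_zero]
  field_simp
  ring

/-- The second Lie derivative of the output along f:
L_f² h(x) = ∇(L_f h)(x)·f(x) = (1/2)·T_sup·(T_sup − T_L)·x_v² + T_sup·v·√(p_sup − p_L − α·p_lp). -/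
theorem stmt3 (T_L T_sup D ω K α p_lp : ℝ)
    (Lfh : (Fin 4 → ℝ) → ℝ)
    (hLfh : Lfh = fun x => T_sup * x 3 * Real.sqrt (x 1 - x 0 - α * p_lp))
    (f : (Fin 4 → ℝ) → (Fin 4 → ℝ))
    (hf : f = fun x => ![T_L * x 3 * Real.sqrt (x 1 - x 0 - α * p_lp),
                         T_sup * x 3 * Real.sqrt (x 1 - x 0 - α * p_lp),
                         -2 * D * ω * x 2 - ω^2 * x 3,
                         x 2]) :
    ∀ x : Fin 4 → ℝ, x 1 - x 0 - α * p_lp > 0 →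
      fderiv ℝ Lfh x (f x) =
        (1/2) * T_sup * (T_sup - T_L) * (x 3)^2
          + T_sup * x 2 * Real.sqrt (x 1 - x 0 - α * p_lp) :=
  stmt3_general T_L T_sup D ω α p_lp Lfh hLfh f hf
end

section
/- For the same system, L_g L_f² h(x) = T_sup·√(p_sup − p_L − α·p_lp)·ω²·K, which is nonzero whenever T_sup ≠ 0, K ≠ 0, ω ≠ 0, and p_sup − p_L − α·p_lp > 0; consequently the relative degree of the output p_sup is 3. -/
/-! The input field `g` points along the `x 2` axis, and `h`, `L_f h`, `L_f² h` are affine on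
every line in that direction (the first two constant), so each `L_g`-derivative is just the
slope along that line; the square root is differentiable because its radicand is positive. -/

open Real

section LineAffine

variable {E : Type*} [NormedAddCommGroup E] [NormedSpace ℝ E]

lemma fderiv_apply_eq_of_affine_on_line {f : E → ℝ} {x v : E} {b : ℝ}
    (hf : DifferentiableAt ℝ f x) (hline : ∀ t : ℝ, f (x + t • v) = f x + t * b) :
    fderiv ℝ f x v = b := by
  rw [← hf.lineDeriv_eq_fderiv, lineDeriv, funext hline]
  simp

end LineAffine

lemma differentiableAt_sqrt_apply_sub_apply_sub {ι : Type*} [Fintype ι] {i j : ι} {c : ℝ}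
    {x : ι → ℝ} (hx : 0 < x i - x j - c) :
    DifferentiableAt ℝ (fun y : ι → ℝ => √(y i - y j - c)) x :=
  (((differentiableAt_apply i x).sub (differentiableAt_apply j x)).sub_const c).sqrt hx.ne'

theorem stmt4_general (T_L T_sup ω K α p_lp : ℝ)
    (h : (Fin 4 → ℝ) → ℝ) (hh : h = fun x => x 1)
    (Lfh : (Fin 4 → ℝ) → ℝ)
    (hLfh : Lfh = fun x => T_sup * x 3 * Real.sqrt (x 1 - x 0 - α * p_lp))
    (Lf2h : (Fin 4 → ℝ) → ℝ)
    (hLf2h : Lf2h = fun x => (1/2) * T_sup * (T_sup - T_L) * (x 3)^2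
          + T_sup * x 2 * Real.sqrt (x 1 - x 0 - α * p_lp))
    (g : Fin 4 → ℝ) (hg : g = ![0, 0, ω^2 * K, 0]) :
    ∀ x : Fin 4 → ℝ, x 1 - x 0 - α * p_lp > 0 →
      fderiv ℝ Lf2h x g = T_sup * Real.sqrt (x 1 - x 0 - α * p_lp) * ω^2 * K ∧
      (T_sup ≠ 0 → K ≠ 0 → ω ≠ 0 →
        -- relative degree 3: L_g h = 0, L_g L_f h = 0, L_g L_f² h ≠ 0
        fderiv ℝ h x g = 0 ∧ fderiv ℝ Lfh x g = 0 ∧ fderiv ℝ Lf2h x g ≠ 0) := by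
  intro x hx
  have hs := differentiableAt_sqrt_apply_sub_apply_sub hx
  have hLgLf2h : fderiv ℝ Lf2h x g = T_sup * √(x 1 - x 0 - α * p_lp) * ω ^ 2 * K := by
    subst hLf2h hg
    exact fderiv_apply_eq_of_affine_on_line (by fun_prop) fun t => by
      simp only [Pi.add_apply, Pi.smul_apply, smul_eq_mul, Matrix.cons_val, Matrix.cons_val_zero,
        Matrix.cons_val_one, mul_zero, add_zero]
      ring
  refine ⟨hLgLf2h, fun hT hK hω => ⟨?_, ?_, ?_⟩⟩
  · subst hh hg
    exact fderiv_apply_eq_of_affine_on_line (by fun_prop) fun t => by simp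
  · subst hLfh hg
    exact fderiv_apply_eq_of_affine_on_line (by fun_prop) fun t => by simp
  · rw [hLgLf2h]
    have := Real.sqrt_pos.mpr hx
    positivity

/-- With L_f² h(x) = (1/2)·T_sup·(T_sup − T_L)·x_v² + T_sup·v·s
(s = √(p_sup − p_L − α·p_lp)), we have L_g L_f² h(x) = T_sup·s·ω²·K, which is
nonzero whenever T_sup ≠ 0, K ≠ 0, ω ≠ 0 and s² > 0; together with
L_g h = 0 and L_g L_f h = 0 this means the relative degree of p_sup is 3. -/
theorem stmt4 (T_L T_sup D ω K α p_lp : ℝ)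
    (h : (Fin 4 → ℝ) → ℝ) (hh : h = fun x => x 1)
    (Lfh : (Fin 4 → ℝ) → ℝ)
    (hLfh : Lfh = fun x => T_sup * x 3 * Real.sqrt (x 1 - x 0 - α * p_lp))
    (Lf2h : (Fin 4 → ℝ) → ℝ)
    (hLf2h : Lf2h = fun x => (1/2) * T_sup * (T_sup - T_L) * (x 3)^2
          + T_sup * x 2 * Real.sqrt (x 1 - x 0 - α * p_lp))
    (g : Fin 4 → ℝ) (hg : g = ![0, 0, ω^2 * K, 0]) :
    ∀ x : Fin 4 → ℝ, x 1 - x 0 - α * p_lp > 0 →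
      fderiv ℝ Lf2h x g = T_sup * Real.sqrt (x 1 - x 0 - α * p_lp) * ω^2 * K ∧
      (T_sup ≠ 0 → K ≠ 0 → ω ≠ 0 →
        -- relative degree 3: L_g h = 0, L_g L_f h = 0, L_g L_f² h ≠ 0
        fderiv ℝ h x g = 0 ∧ fderiv ℝ Lfh x g = 0 ∧ fderiv ℝ Lf2h x g ≠ 0) :=
  stmt4_general T_L T_sup ω K α p_lp h hh Lfh hLfh Lf2h hLf2h g hg
end

section
/- The map H(x) = (h(x), L_f h(x), L_f² h(x)) from ℝ⁴ to ℝ³ has Jacobian of rank 3 at every point x with p_sup − p_L − α·p_lp > 0, T_sup ≠ 0, and (x_v, v) ≠ (0,0) or more generally away from singular points; in particular rank H(x) = 3 < 4, so H is not a diffeomorphism onto its image from ℝ⁴. -/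
/-!
At an operating point the Jacobian of `H` has the upper triangular minor formed by the columns
`∂/∂p_sup`, `∂/∂x_v`, `∂/∂v`, with diagonal `1, T_sup s, T_sup s`; hence it has full rank `3`.
`H` is not injective because `p_L` only enters through `s`, which is multiplied by `x_v` or `v`:
the two points `(0, 0, 0, 0)` and `(1, 0, 0, 0)` have the same image.
-/

open ContinuousLinearMap

theorem LinearMap.rank_eq_card_of_det_ne_zero {K V ι : Type*} [Field K] [AddCommGroup V]
    [Module K V] [Fintype ι] [DecidableEq ι] (L : V →ₗ[K] (ι → K)) (v : ι → V)
    (hv : (Matrix.of fun i => L (v i)).det ≠ 0) : L.rank = Fintype.card ι := by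
  have hspan : Submodule.span K (Set.range fun i => L (v i)) = ⊤ :=
    (Matrix.linearIndependent_rows_of_det_ne_zero hv).span_eq_top_of_card_eq_finrank' (by simp)
  have hsurj : LinearMap.range L = ⊤ := by
    rw [eq_top_iff, ← hspan, Submodule.span_le]
    rintro _ ⟨i, rfl⟩
    exact ⟨v i, rfl⟩
  rw [LinearMap.rank, hsurj, rank_top, rank_fun']

section

variable (T_L T_sup α p_lp : ℝ)

/-- The coordinates are `x = (p_L, p_sup, v, x_v)`. -/
noncomputable def observabilityMap (x : Fin 4 → ℝ) : Fin 3 → ℝ :=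
  ![x 1,
    T_sup * x 3 * Real.sqrt (x 1 - x 0 - α * p_lp),
    (1/2) * T_sup * (T_sup - T_L) * (x 3)^2
      + T_sup * x 2 * Real.sqrt (x 1 - x 0 - α * p_lp)]

variable {α p_lp} {x : Fin 4 → ℝ}

local notation "𝐞" => ContinuousLinearMap.proj (R := ℝ) (φ := fun _ : Fin 4 => ℝ)

theorem hasFDerivAt_sqrt_gap (hs : 0 < x 1 - x 0 - α * p_lp) :
    HasFDerivAt (fun y : Fin 4 → ℝ => √(y 1 - y 0 - α * p_lp))
      ((1 / (2 * √(x 1 - x 0 - α * p_lp))) • (𝐞 1 - 𝐞 0)) x :=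
  (((hasFDerivAt_apply 1 x).sub (hasFDerivAt_apply 0 x)).sub_const (α * p_lp)).sqrt hs.ne'

theorem hasFDerivAt_observabilityMap (hs : 0 < x 1 - x 0 - α * p_lp) :
    let s := √(x 1 - x 0 - α * p_lp)
    HasFDerivAt (observabilityMap T_L T_sup α p_lp)
      (pi ![𝐞 1,
        (T_sup * x 3 / (2 * s)) • (𝐞 1 - 𝐞 0) + (T_sup * s) • 𝐞 3,
        (T_sup * (T_sup - T_L) * x 3) • 𝐞 3 + (T_sup * x 2 / (2 * s)) • (𝐞 1 - 𝐞 0)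
          + (T_sup * s) • 𝐞 2]) x := by
  intro s
  have hsqrt := hasFDerivAt_sqrt_gap hs
  refine hasFDerivAt_pi'' fun i => ?_
  fin_cases i <;>
    simp only [observabilityMap, proj_pi, Matrix.cons_val_zero, Matrix.cons_val_one,
      Matrix.cons_val_two, Fin.isValue, Fin.zero_eta, Fin.mk_one, Fin.reduceFinMk]
  · exact hasFDerivAt_apply 1 x
  · exact (((hasFDerivAt_apply 3 x).const_mul T_sup).mul hsqrt).congr_fderiv
      (ContinuousLinearMap.ext fun v => by simp; ring)
  · exact ((((hasFDerivAt_apply 3 x).pow 2).const_mul ((1/2) * T_sup * (T_sup - T_L))).add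
      (((hasFDerivAt_apply 2 x).const_mul T_sup).mul hsqrt)).congr_fderiv
      (ContinuousLinearMap.ext fun v => by simp; ring)

theorem rank_fderiv_observabilityMap (hT : T_sup ≠ 0) (hs : 0 < x 1 - x 0 - α * p_lp) :
    ((fderiv ℝ (observabilityMap T_L T_sup α p_lp) x : (Fin 4 → ℝ) →L[ℝ] (Fin 3 → ℝ)) :
      (Fin 4 → ℝ) →ₗ[ℝ] (Fin 3 → ℝ)).rank = 3 := by
  have hs' : √(x 1 - x 0 - α * p_lp) ≠ 0 := (Real.sqrt_pos.2 hs).ne'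
  rw [(hasFDerivAt_observabilityMap T_L T_sup hs).fderiv]
  refine (LinearMap.rank_eq_card_of_det_ne_zero _ ![Pi.single 1 1, Pi.single 3 1, Pi.single 2 1]
    ?_).trans (by simp)
  simp [Matrix.det_fin_three, hT, hs']

theorem observabilityMap_not_injective :
    ¬ Function.Injective (observabilityMap T_L T_sup α p_lp) := by
  intro hinj
  have hcollide : observabilityMap T_L T_sup α p_lp ![0, 0, 0, 0] =
      observabilityMap T_L T_sup α p_lp ![1, 0, 0, 0] := by
    ext i
    fin_cases i <;> simp [observabilityMap]
  simpa using congrFun (hinj hcollide) 0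

end

/-- The map H(x) = (h, L_f h, L_f² h) : ℝ⁴ → ℝ³ has Jacobian of
rank 3 at every operating point (s > 0, T_sup ≠ 0, x_v ≠ 0); since 3 < 4,
H cannot be injective, hence H is not a diffeomorphism from ℝ⁴. -/
theorem stmt6 (T_L T_sup α p_lp : ℝ) (hT : T_sup ≠ 0)
    (H : (Fin 4 → ℝ) → (Fin 3 → ℝ))
    (hH : H = fun x => ![x 1,
          T_sup * x 3 * Real.sqrt (x 1 - x 0 - α * p_lp),
          (1/2) * T_sup * (T_sup - T_L) * (x 3)^2
            + T_sup * x 2 * Real.sqrt (x 1 - x 0 - α * p_lp)]) :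
    (∀ x : Fin 4 → ℝ, x 1 - x 0 - α * p_lp > 0 → x 3 ≠ 0 →
        LinearMap.rank ((fderiv ℝ H x : (Fin 4 → ℝ) →L[ℝ] (Fin 3 → ℝ)) :
          (Fin 4 → ℝ) →ₗ[ℝ] (Fin 3 → ℝ)) = 3) ∧
    ¬ Function.Injective H := by
  change H = observabilityMap T_L T_sup α p_lp at hH
  subst hH
  exact ⟨fun x hs _ => rank_fderiv_observabilityMap T_L T_sup hT hs,
    observabilityMap_not_injective T_L T_sup⟩
end

section
/- The augmented map M(x) = (p_L, h(x), L_f h(x), L_f² h(x)) from ℝ⁴ to ℝ⁴ has nonsingular Jacobian at every point with p_sup − p_L − α·p_lp > 0, T_sup ≠ 0 and x_v ≠ 0. -/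
/-!
The first two components of `M` are the coordinates `p_L, p_sup`, so its Jacobian is block lower
triangular and its determinant is the `2 × 2` minor of the last two components in the directions
`v, x_v`. The radicand `s²` does not depend on `v, x_v`, so that minor is
`det [[0, T_sup·s], [T_sup·s, *]] = −(T_sup·s)²`, nonzero when `s > 0` and `T_sup ≠ 0`.
-/

open ContinuousLinearMap

theorem det_fderiv_vecCons_coord_zero_coord_one {f g : (Fin 4 → ℝ) → ℝ} {x : Fin 4 → ℝ}
    (hf : DifferentiableAt ℝ f x) (hg : DifferentiableAt ℝ g x) :
    LinearMap.det ((fderiv ℝ (fun y => ![y 0, y 1, f y, g y]) x :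
        (Fin 4 → ℝ) →L[ℝ] (Fin 4 → ℝ)) : (Fin 4 → ℝ) →ₗ[ℝ] (Fin 4 → ℝ)) =
      fderiv ℝ f x (Pi.single 2 1) * fderiv ℝ g x (Pi.single 3 1)
        - fderiv ℝ f x (Pi.single 3 1) * fderiv ℝ g x (Pi.single 2 1) := by
  have hM : HasFDerivAt (fun y => ![y 0, y 1, f y, g y])
      (pi ![proj 0, proj 1, fderiv ℝ f x, fderiv ℝ g x]) x := by
    refine hasFDerivAt_pi.mpr fun i => ?_
    fin_cases i
    exacts [hasFDerivAt_apply 0 x, hasFDerivAt_apply 1 x, hf.hasFDerivAt, hg.hasFDerivAt]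
  rw [hM.fderiv, ← LinearMap.det_toMatrix', Matrix.det_succ_row_zero]
  simp [Fin.sum_univ_succ, LinearMap.toMatrix'_apply, Matrix.det_succ_row_zero, sub_eq_add_neg]

theorem HasLineDerivAt.fderiv_apply {𝕜 E F : Type*} [NontriviallyNormedField 𝕜]
    [NormedAddCommGroup E] [NormedSpace 𝕜 E] [NormedAddCommGroup F] [NormedSpace 𝕜 F]
    {f : E → F} {f' : F} {x v : E} (h : HasLineDerivAt 𝕜 f f' x v)
    (hf : DifferentiableAt 𝕜 f x) : fderiv 𝕜 f x v = f' :=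
  hf.lineDeriv_eq_fderiv.symm.trans h.lineDeriv

/-- The augmented map M(x) = (p_L, h, L_f h, L_f² h) : ℝ⁴ → ℝ⁴
has nonsingular Jacobian (nonzero determinant) at every point with
p_sup − p_L − α·p_lp > 0, T_sup ≠ 0 and x_v ≠ 0. -/
theorem stmt7 (T_L T_sup α p_lp : ℝ) (hT : T_sup ≠ 0)
    (M : (Fin 4 → ℝ) → (Fin 4 → ℝ))
    (hM : M = fun x => ![x 0, x 1,
          T_sup * x 3 * Real.sqrt (x 1 - x 0 - α * p_lp),
          (1/2) * T_sup * (T_sup - T_L) * (x 3)^2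
            + T_sup * x 2 * Real.sqrt (x 1 - x 0 - α * p_lp)]) :
    ∀ x : Fin 4 → ℝ, x 1 - x 0 - α * p_lp > 0 → x 3 ≠ 0 →
      LinearMap.det ((fderiv ℝ M x : (Fin 4 → ℝ) →L[ℝ] (Fin 4 → ℝ)) :
        (Fin 4 → ℝ) →ₗ[ℝ] (Fin 4 → ℝ)) ≠ 0 := by
  subst hM
  intro x hx _
  set s := Real.sqrt (x 1 - x 0 - α * p_lp)
  set f := fun y : Fin 4 → ℝ => T_sup * y 3 * Real.sqrt (y 1 - y 0 - α * p_lp)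
  set g := fun y : Fin 4 → ℝ => (1/2) * T_sup * (T_sup - T_L) * (y 3)^2
    + T_sup * y 2 * Real.sqrt (y 1 - y 0 - α * p_lp)
  have hf : DifferentiableAt ℝ f x := by fun_prop (disch := exact hx.ne')
  have hg : DifferentiableAt ℝ g x := by fun_prop (disch := exact hx.ne')
  have hf₂ : HasLineDerivAt ℝ f 0 x (Pi.single 2 1) := by
    simpa [HasLineDerivAt, f] using hasDerivAt_const (0 : ℝ) (T_sup * x 3 * s)
  have hf₃ : HasLineDerivAt ℝ f (T_sup * s) x (Pi.single 3 1) := by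
    simpa [HasLineDerivAt, f] using ((hasDerivAt_id' (0 : ℝ)).const_add (x 3)).const_mul T_sup
      |>.mul_const s
  have hg₂ : HasLineDerivAt ℝ g (T_sup * s) x (Pi.single 2 1) := by
    simpa [HasLineDerivAt, g] using ((((hasDerivAt_id' (0 : ℝ)).const_add (x 2)).const_mul T_sup
      |>.mul_const s).const_add ((1/2) * T_sup * (T_sup - T_L) * (x 3)^2))
  rw [det_fderiv_vecCons_coord_zero_coord_one hf hg, hf₂.fderiv_apply hf, hf₃.fderiv_apply hf,
    hg₂.fderiv_apply hg, zero_mul, zero_sub, neg_ne_zero]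
  exact mul_self_ne_zero.mpr (mul_ne_zero hT (Real.sqrt_ne_zero'.mpr hx))
end
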